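/- Let $v : \mathbb{R} \to [0,\infty)$ be measurable with $\int_{-\infty}^0 v < \infty$ and $\int_{\mathbb{R}} v = \infty$. For $\Delta, \delta > 0$ define the middle-cut operator $\mathcal{C}_{\Delta,\delta} v(x) = v(x)\mathbf{1}_{(-\infty, \gamma^\Delta_v)}(x) + v(x)\mathbf{1}_{[\gamma^{\Delta+\delta}_v, \infty)}(x)$, where $\gamma^q_v = \inf\{a : \int_{-\infty}^a v = q\}$. If $0 < \hat\Delta \leq \Delta$, then $\int_{-\infty}^r \mathcal{C}_{\hat\Delta,\delta} v \leq \int_{-\infty}^r \mathcal{C}_{\Delta,\delta} v$ for all $r \in \mathbb{R}$. -/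

import Mathlib

open MeasureTheory Set
open scoped ENNReal NNReal

/-- Cumulative integral `∫_{-∞}^a w`. -/
noncomputable def cum (w : ℝ → ℝ) (a : ℝ) : ℝ≥0∞ :=
  ∫⁻ x in Set.Iic a, ENNReal.ofReal (w x)

/-- The level `γ_w^q = inf {a : ∫_{-∞}^a w = q}`. -/
noncomputable def gammaLvl (w : ℝ → ℝ) (q : ℝ) : ℝ :=
  sInf {a : ℝ | cum w a = ENNReal.ofReal q}

/-- The middle-cut operator `C_{Δ,δ} w = w·1_{(-∞,γ_w^Δ)} + w·1_{[γ_w^{Δ+δ},∞)}`,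
removing the mass of `w` between cumulative levels `Δ` and `Δ+δ`. -/
noncomputable def midCut (Δ δ : ℝ) (w : ℝ → ℝ) : ℝ → ℝ :=
  fun x => if x < gammaLvl w Δ ∨ gammaLvl w (Δ + δ) ≤ x then w x else 0

/-!
Let `μ` be the measure with density `v` and `F a = μ (-∞, a]`. Since `μ` has no atoms and
`F 0 < ∞`, the levels `q > 0` attained by `F` form an initial segment, and at such a level
`F (γ^q) = q`; at the others `γ^q = sInf ∅ = 0`. The `Δ̂`-cut removes `[γ^Δ̂, γ^{Δ̂+δ})` and the
`Δ`-cut removes `[γ^Δ, γ^{Δ+δ})`, where `γ^Δ̂ ≤ γ^Δ` and the first interval carries at least as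
much mass as the second. Hence below every `r` the `Δ̂`-cut removes at least as much mass.
-/

theorem measure_sdiff_le_measure_sdiff {α : Type*} [MeasurableSpace α] {μ : Measure α}
    {s t t' : Set α} (ht : MeasurableSet t) (ht' : MeasurableSet t')
    (h : μ (s ∩ t') ≤ μ (s ∩ t)) (hfin : μ (s ∩ t) ≠ ⊤) : μ (s \ t) ≤ μ (s \ t') := by
  rw [← ENNReal.add_le_add_iff_left hfin, measure_inter_add_sdiff s ht]
  calc μ s = μ (s ∩ t') + μ (s \ t') := (measure_inter_add_sdiff s ht').symm
    _ ≤ μ (s ∩ t) + μ (s \ t') := by gcongr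

section Real

variable {μ : Measure ℝ} {a b a' b' c d x : ℝ} {q : ℝ≥0∞}

theorem measure_Iic_inter_Ico_le (ha : a ≤ a') (h : μ (Ico a' b') ≤ μ (Ico a b)) (r : ℝ) :
    μ (Iic r ∩ Ico a' b') ≤ μ (Iic r ∩ Ico a b) := by
  rcases lt_or_ge r b with hr | hr
  · exact measure_mono fun y ⟨hyr, hya', _⟩ => ⟨hyr, ha.trans hya', hyr.trans_lt hr⟩
  · calc μ (Iic r ∩ Ico a' b') ≤ μ (Ico a' b') := measure_mono inter_subset_right
      _ ≤ μ (Ico a b) := h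
      _ = μ (Iic r ∩ Ico a b) := by
        rw [inter_eq_right.2 fun y hy => hy.2.le.trans hr]

theorem measure_Iic_le_of_forall_lt [NullSingletonClass μ] (h : ∀ b < c, μ (Iic b) ≤ q) :
    μ (Iic c) ≤ q := by
  obtain ⟨u, hu_mono, hu_lt, hu_lim⟩ := exists_seq_strictMono_tendsto c
  have hU : ⋃ n, Iic (u n) = Iio c := by
    ext y
    simp only [mem_iUnion, mem_Iic, mem_Iio]
    exact ⟨fun ⟨n, hn⟩ => hn.trans_lt (hu_lt n),
      fun hy => (hu_lim.eventually (lt_mem_nhds hy)).exists.imp fun _ => le_of_lt⟩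
  rw [← measure_congr Iio_ae_eq_Iic, ← hU]
  exact le_of_tendsto' (tendsto_measure_iUnion_atTop (monotone_Iic.comp hu_mono.monotone))
    fun n => h _ (hu_lt n)

theorem le_measure_Iic_of_forall_gt (hcd : c < d) (hd : μ (Iic d) ≠ ⊤)
    (h : ∀ b > c, q ≤ μ (Iic b)) : q ≤ μ (Iic c) := by
  have hlim := tendsto_measure_biInter_gt (μ := μ) (s := Iic) (a := c)
    (fun _ _ => measurableSet_Iic.nullMeasurableSet) (fun _ _ _ hij => Iic_subset_Iic.2 hij)
    ⟨d, hcd, hd⟩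
  have hInter : ⋂ b > c, Iic b = Iic c := by
    ext y
    simp only [mem_iInter, mem_Iic]
    exact ⟨fun hy => le_of_forall_gt_imp_ge_of_dense hy, fun hy b hb => hy.trans hb.le⟩
  rw [hInter] at hlim
  exact ge_of_tendsto hlim (eventually_nhdsWithin_of_forall h)

theorem exists_measure_Iic_lt (h₀ : μ (Iic x) ≠ ⊤) (hq : 0 < q) : ∃ a, μ (Iic a) < q := by
  have hlim := tendsto_measure_iInter_atBot (μ := μ) (s := Iic)
    (fun _ => measurableSet_Iic.nullMeasurableSet) monotone_Iic ⟨x, h₀⟩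
  have hInter : ⋂ a : ℝ, Iic a = ∅ := by
    ext y
    simp only [mem_iInter, mem_Iic, mem_empty_iff_false, iff_false, not_forall, not_le]
    exact ⟨y - 1, by linarith⟩
  rw [hInter, measure_empty] at hlim
  exact (hlim.eventually (gt_mem_nhds hq)).exists

theorem bddBelow_setOf_le_measure_Iic (h₀ : μ (Iic x) ≠ ⊤) (hq : 0 < q) :
    BddBelow {a | q ≤ μ (Iic a)} := by
  obtain ⟨a₀, ha₀⟩ := exists_measure_Iic_lt h₀ hq
  exact ⟨a₀, fun a ha => le_of_not_gt fun hlt =>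
    (ha.trans (measure_mono (Iic_subset_Iic.2 hlt.le))).not_gt ha₀⟩

theorem le_measure_Iic_csInf {S : Set ℝ} (hS : BddBelow S) (hx : x ∈ S) (hfin : μ (Iic x) ≠ ⊤)
    (hq : ∀ a ∈ S, q ≤ μ (Iic a)) : q ≤ μ (Iic (sInf S)) := by
  rcases (csInf_le hS hx).eq_or_lt with h | h
  · rw [h]
    exact hq x hx
  · refine le_measure_Iic_of_forall_gt h hfin fun b hb => ?_
    obtain ⟨a, ha, hab⟩ := exists_lt_of_csInf_lt ⟨x, hx⟩ hb
    exact (hq a ha).trans (measure_mono (Iic_subset_Iic.2 hab.le))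

theorem exists_measure_Iic_eq [NullSingletonClass μ] (hq : 0 < q) (hx : q ≤ μ (Iic x))
    (hfin : μ (Iic x) ≠ ⊤) : ∃ a, μ (Iic a) = q := by
  have hS := bddBelow_setOf_le_measure_Iic hfin hq
  refine ⟨sInf {a | q ≤ μ (Iic a)}, le_antisymm ?_ (le_measure_Iic_csInf hS hx hfin fun _ => id)⟩
  exact measure_Iic_le_of_forall_lt fun b hb =>
    (not_le.1 fun hbS => (csInf_le hS hbS).not_gt hb).le

theorem measure_Iic_le_add_measure_Ico [NullSingletonClass μ] (a b : ℝ) :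
    μ (Iic b) ≤ μ (Iic a) + μ (Ico a b) := by
  rw [measure_congr Ico_ae_eq_Ioc]
  refine (measure_mono fun y (hy : y ≤ b) => ?_).trans (measure_union_le _ _)
  rcases le_or_gt y a with hya | hya
  · exact Or.inl hya
  · exact Or.inr ⟨hya, hy⟩

theorem measure_Ico_le_of_measure_Iic_le_add [NullSingletonClass μ] {s : ℝ≥0∞}
    (ha : μ (Iic a) ≠ ⊤) (h : μ (Iic b) ≤ μ (Iic a) + s) : μ (Ico a b) ≤ s := by
  rw [measure_congr Ico_ae_eq_Ioc]
  rcases le_total a b with hab | hba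
  · rwa [← ENNReal.add_le_add_iff_left ha, ← measure_union (Iic_disjoint_Ioc le_rfl)
      measurableSet_Ioc, Iic_union_Ioc_eq_Iic hab]
  · simp [Ioc_eq_empty_of_le hba]

end Real

noncomputable def levelInf (μ : Measure ℝ) (q : ℝ) : ℝ :=
  sInf {a | μ (Iic a) = ENNReal.ofReal q}

noncomputable def levelCut (μ : Measure ℝ) (Δ δ : ℝ) : Set ℝ :=
  Ico (levelInf μ Δ) (levelInf μ (Δ + δ))

theorem measurableSet_levelCut (μ : Measure ℝ) (Δ δ : ℝ) : MeasurableSet (levelCut μ Δ δ) :=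
  measurableSet_Ico

section Level

variable {μ : Measure ℝ} {x : ℝ} {q p s : ℝ}

theorem levelInf_of_forall_ne (h : ∀ a, μ (Iic a) ≠ ENNReal.ofReal q) : levelInf μ q = 0 := by
  simp [levelInf, h]

theorem bddBelow_setOf_measure_Iic_eq (h₀ : μ (Iic x) ≠ ⊤) (hq : 0 < q) :
    BddBelow {a | μ (Iic a) = ENNReal.ofReal q} :=
  (bddBelow_setOf_le_measure_Iic h₀ (ENNReal.ofReal_pos.2 hq)).mono fun _ ha => ha.ge

theorem measure_Iic_levelInf (hq : 0 < q) (hx : μ (Iic x) = ENNReal.ofReal q) :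
    μ (Iic (levelInf μ q)) = ENNReal.ofReal q := by
  have hfin : μ (Iic x) ≠ ⊤ := hx ▸ ENNReal.ofReal_ne_top
  have hS := bddBelow_setOf_measure_Iic_eq hfin hq
  exact le_antisymm ((measure_mono (Iic_subset_Iic.2 (csInf_le hS hx))).trans_eq hx)
    (le_measure_Iic_csInf hS hx hfin fun _ ha => ha.ge)

theorem levelInf_le (hq : 0 < q) (h : μ (Iic (levelInf μ q)) = ENNReal.ofReal q)
    (hx : ENNReal.ofReal q ≤ μ (Iic x)) : levelInf μ q ≤ x := by
  by_contra! hlt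
  have hxq : μ (Iic x) = ENNReal.ofReal q :=
    le_antisymm ((measure_mono (Iic_subset_Iic.2 hlt.le)).trans_eq h) hx
  exact hlt.not_ge (csInf_le (bddBelow_setOf_measure_Iic_eq (h ▸ ENNReal.ofReal_ne_top) hq) hxq)

variable [NullSingletonClass μ]

theorem exists_measure_Iic_eq_ofReal (hq : 0 < q) (hpq : q ≤ p)
    (hx : μ (Iic x) = ENNReal.ofReal p) : ∃ a, μ (Iic a) = ENNReal.ofReal q :=
  exists_measure_Iic_eq (ENNReal.ofReal_pos.2 hq) (hx ▸ ENNReal.ofReal_le_ofReal hpq)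
    (hx ▸ ENNReal.ofReal_ne_top)

theorem measure_Iic_levelInf_le (h₀ : μ (Iic 0) ≠ ⊤) (hq : 0 < q) :
    μ (Iic (levelInf μ q)) ≤ ENNReal.ofReal q := by
  by_cases hex : ∃ x, μ (Iic x) = ENNReal.ofReal q
  · obtain ⟨x, hx⟩ := hex
    exact (measure_Iic_levelInf hq hx).le
  · push Not at hex
    rw [levelInf_of_forall_ne hex]
    by_contra! hlt
    obtain ⟨a, ha⟩ := exists_measure_Iic_eq (ENNReal.ofReal_pos.2 hq) hlt.le h₀
    exact hex a ha

theorem levelInf_le_levelInf (hp : 0 < p) (hpq : p ≤ q)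
    (hq : μ (Iic (levelInf μ q)) = ENNReal.ofReal q) : levelInf μ p ≤ levelInf μ q := by
  obtain ⟨a, ha⟩ := exists_measure_Iic_eq_ofReal hp hpq hq
  exact levelInf_le hp (measure_Iic_levelInf hp ha) (hq ▸ ENNReal.ofReal_le_ofReal hpq)

theorem measure_levelCut_ne_top (h₀ : μ (Iic 0) ≠ ⊤) (hp : 0 < p) (hs : 0 < s) :
    μ (levelCut μ p s) ≠ ⊤ :=
  ne_top_of_le_ne_top ENNReal.ofReal_ne_top <|
    (measure_mono (Ico_subset_Iio_self.trans Iio_subset_Iic_self)).trans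
      (measure_Iic_levelInf_le h₀ (add_pos hp hs))

/-- The higher cut removes at most `δ`; the lower one removes exactly `δ` unless its upper level is
unattained, and then both cuts end at `0`. -/
theorem measure_levelCut_le (h₀ : μ (Iic 0) ≠ ⊤) (hp : 0 < p) (hs : 0 < s) (hpq : p ≤ q)
    (hq : μ (Iic (levelInf μ q)) = ENNReal.ofReal q) :
    μ (levelCut μ q s) ≤ μ (levelCut μ p s) := by
  have hq0 : 0 < q := hp.trans_le hpq
  by_cases hps : ∃ x, μ (Iic x) = ENNReal.ofReal (p + s)
  · obtain ⟨x, hx⟩ := hps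
    obtain ⟨a, ha⟩ := exists_measure_Iic_eq_ofReal hp (by linarith) hx
    have hp' := measure_Iic_levelInf hp ha
    have hps' := measure_Iic_levelInf (by linarith) hx
    calc μ (levelCut μ q s) ≤ ENNReal.ofReal s := by
          refine measure_Ico_le_of_measure_Iic_le_add (hq ▸ ENNReal.ofReal_ne_top) ?_
          rw [hq, ← ENNReal.ofReal_add hq0.le hs.le]
          exact measure_Iic_levelInf_le h₀ (by linarith)
      _ ≤ μ (levelCut μ p s) := by
          have := measure_Iic_le_add_measure_Ico (μ := μ) (levelInf μ p) (levelInf μ (p + s))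
          rwa [hps', hp', ENNReal.ofReal_add hp.le hs.le,
            ENNReal.add_le_add_iff_left ENNReal.ofReal_ne_top] at this
  · push Not at hps
    have hqs : ∀ a, μ (Iic a) ≠ ENNReal.ofReal (q + s) := fun a ha =>
      (exists_measure_Iic_eq_ofReal (by linarith) (by linarith) ha).elim hps
    rw [levelCut, levelCut, levelInf_of_forall_ne hps, levelInf_of_forall_ne hqs]
    exact measure_mono (Ico_subset_Ico_left (levelInf_le_levelInf hp hpq hq))

theorem measure_Iic_sdiff_levelCut_le (h₀ : μ (Iic 0) ≠ ⊤) (hp : 0 < p) (hs : 0 < s)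
    (hpq : p ≤ q) (r : ℝ) : μ (Iic r \ levelCut μ p s) ≤ μ (Iic r \ levelCut μ q s) := by
  by_cases hq : ∃ x, μ (Iic x) = ENNReal.ofReal q
  · obtain ⟨x, hx⟩ := hq
    have hq' := measure_Iic_levelInf (hp.trans_le hpq) hx
    exact measure_sdiff_le_measure_sdiff (measurableSet_levelCut μ p s)
      (measurableSet_levelCut μ q s)
      (measure_Iic_inter_Ico_le (levelInf_le_levelInf hp hpq hq')
        (measure_levelCut_le h₀ hp hs hpq hq') r)
      (ne_top_of_le_ne_top (measure_levelCut_ne_top h₀ hp hs) (measure_mono inter_subset_right))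
  · push Not at hq
    have hqs : ∀ a, μ (Iic a) ≠ ENNReal.ofReal (q + s) := fun a ha =>
      (exists_measure_Iic_eq_ofReal (hp.trans_le hpq) (by linarith) ha).elim hq
    have hcut : levelCut μ q s = ∅ := by
      rw [levelCut, levelInf_of_forall_ne hq, levelInf_of_forall_ne hqs, Ico_self]
    rw [hcut, sdiff_empty]
    exact measure_mono sdiff_subset

end Level

theorem cum_eq_withDensity (w : ℝ → ℝ) (a : ℝ) :
    cum w a = volume.withDensity (fun x => ENNReal.ofReal (w x)) (Iic a) :=
  (withDensity_apply _ measurableSet_Iic).symm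

theorem cum_midCut (Δ δ : ℝ) (w : ℝ → ℝ) (r : ℝ) :
    cum (midCut Δ δ w) r =
      volume.withDensity (fun x => ENNReal.ofReal (w x)) (Iic r \ levelCut
        (volume.withDensity fun x => ENNReal.ofReal (w x)) Δ δ) := by
  have hγ : ∀ q, gammaLvl w q = levelInf (volume.withDensity fun x => ENNReal.ofReal (w x)) q :=
    fun q => by simp only [gammaLvl, levelInf, cum_eq_withDensity]
  have hind : (fun x => ENNReal.ofReal (midCut Δ δ w x)) =
      (levelCut (volume.withDensity fun x => ENNReal.ofReal (w x)) Δ δ)ᶜ.indicator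
        fun x => ENNReal.ofReal (w x) := by
    ext x
    simp only [midCut, hγ, levelCut, indicator_apply, mem_compl_iff, mem_Ico, not_and_or, not_le,
      not_lt]
    split_ifs <;> simp
  have hK := (measurableSet_levelCut (volume.withDensity fun x => ENNReal.ofReal (w x)) Δ δ).compl
  rw [cum, hind, lintegral_indicator hK, Measure.restrict_restrict hK, ← sdiff_eq_compl_inter,
    withDensity_apply _ (measurableSet_Iic.diff hK.of_compl)]

theorem stmt_3_general (v : ℝ → ℝ) (hv_left : cum v 0 < ⊤)
    (Δ δ Δhat : ℝ) (hδ : 0 < δ)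
    (hΔhat_pos : 0 < Δhat) (hΔhat_le : Δhat ≤ Δ) :
    ∀ r : ℝ, cum (midCut Δhat δ v) r ≤ cum (midCut Δ δ v) r := by
  intro r
  rw [cum_midCut, cum_midCut]
  refine measure_Iic_sdiff_levelCut_le ?_ hΔhat_pos hδ hΔhat_le r
  rw [← cum_eq_withDensity]
  exact hv_left.ne

/-- Removing mass at a lower cumulative level gives a smaller function in the
left-integral ordering: if `0 < Δ̂ ≤ Δ` then
`∫_{-∞}^r C_{Δ̂,δ} v ≤ ∫_{-∞}^r C_{Δ,δ} v` for all `r`. -/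
theorem stmt_3 (v : ℝ → ℝ) (hv_meas : Measurable v) (hv_nonneg : ∀ x, 0 ≤ v x)
    (hv_left : cum v 0 < ⊤) (hv_total : ∫⁻ x, ENNReal.ofReal (v x) = ⊤)
    (Δ δ Δhat : ℝ) (hΔ : 0 < Δ) (hδ : 0 < δ)
    (hΔhat_pos : 0 < Δhat) (hΔhat_le : Δhat ≤ Δ) :
    ∀ r : ℝ, cum (midCut Δhat δ v) r ≤ cum (midCut Δ δ v) r :=
  stmt_3_general v hv_left Δ δ Δhat hδ hΔhat_pos hΔhat_le
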